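/- If Null(Φ) ∩ 𝒦 ∩ 𝒫 = {0}, then the sublevel set {Θ ∈ 𝒦 ∩ 𝒫 : ‖Y − ΦΘ‖_F ≤ ‖Y‖_F} is a bounded subset of ℝ^{n×L}: there exists C > 0 such that every Θ in this set satisfies ‖Θ‖_F ≤ C. -/

import Mathlib

/-!
The set `𝒦 ∩ 𝒫` is a closed cone, so its intersection with the unit sphere is compact, and by
the null-space property `Θ ↦ ‖ΦΘ‖` is positive there. Its minimum `c > 0` gives
`c ‖Θ‖ ≤ ‖ΦΘ‖` on the whole cone, while on the sublevel set
`‖ΦΘ‖ ≤ ‖Y‖ + ‖Y - ΦΘ‖ ≤ 2 ‖Y‖`; hence `‖Θ‖ ≤ 2 ‖Y‖ / c`.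
-/

/-- Frobenius norm of a real matrix. -/
noncomputable def frob {a b : ℕ} (A : Matrix (Fin a) (Fin b) ℝ) : ℝ :=
  Real.sqrt (∑ i, ∑ j, (A i j) ^ 2)

/-- The set of a×b matrices whose every column has at most k nonzero entries. -/
def colSparse (a b k : ℕ) : Set (Matrix (Fin a) (Fin b) ℝ) :=
  {Θ | ∀ l, ({i | Θ i l ≠ 0} : Set (Fin a)).ncard ≤ k}

/-- The set of a×b matrices having at most p nonzero rows. -/
def rowSparse (a b p : ℕ) : Set (Matrix (Fin a) (Fin b) ℝ) :=
  {Θ | ({i | ∃ l, Θ i l ≠ 0} : Set (Fin a)).ncard ≤ p}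

theorem exists_pos_mul_norm_le_norm_of_isClosed_cone {E F : Type*} [NormedAddCommGroup E]
    [NormedSpace ℝ E] [FiniteDimensional ℝ E] [NormedAddCommGroup F] [NormedSpace ℝ F]
    (f : E →ₗ[ℝ] F) {T : Set E} (hT : IsClosed T) (hcone : ∀ c : ℝ, 0 < c → ∀ v ∈ T, c • v ∈ T)
    (hker : ∀ v ∈ T, f v = 0 → v = 0) :
    ∃ c > 0, ∀ v ∈ T, c * ‖v‖ ≤ ‖f v‖ := by
  have hK : IsCompact (T ∩ Metric.sphere 0 1) := (isCompact_sphere 0 1).inter_left hT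
  have hpos : ∀ u ∈ T ∩ Metric.sphere 0 1, 0 < ‖f u‖ := by
    rintro u ⟨huT, hu⟩
    refine norm_pos_iff.mpr fun hfu => ?_
    simp [hker u huT hfu] at hu
  obtain ⟨c, hc, hcK⟩ :=
    hK.exists_forall_le' f.continuous_of_finiteDimensional.norm.continuousOn hpos
  refine ⟨c, hc, fun v hv => ?_⟩
  rcases eq_or_ne v 0 with rfl | hv0
  · simp
  have hvpos : 0 < ‖v‖ := norm_pos_iff.mpr hv0
  have hu : ‖v‖⁻¹ • v ∈ T ∩ Metric.sphere 0 1 :=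
    ⟨hcone _ (inv_pos.mpr hvpos) v hv, by simp [norm_smul, hvpos.ne']⟩
  have := hcK _ hu
  rwa [map_smul, norm_smul, norm_inv, norm_norm, le_inv_mul_iff₀ hvpos, mul_comm] at this

theorem isClosed_setOf_ncard_le {X ι : Type*} [TopologicalSpace X] [Finite ι]
    {P : ι → X → Prop} (hP : ∀ i, IsOpen {x | P i x}) (k : ℕ) :
    IsClosed {x | {i | P i x}.ncard ≤ k} := by
  have hcompl : {x | {i | P i x}.ncard ≤ k}ᶜ =
      ⋃ s : Finset ι, ⋃ (_ : k < s.card), ⋂ i ∈ s, {x | P i x} := by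
    ext x
    simp only [Set.mem_compl_iff, Set.mem_ofPred_eq, not_le, Set.mem_iUnion, Set.mem_iInter,
      exists_prop]
    constructor
    · intro h
      refine ⟨(Set.toFinite {i | P i x}).toFinset, ?_, fun i hi => by simpa using hi⟩
      rwa [← Set.ncard_eq_toFinset_card]
    · rintro ⟨s, hs, hsP⟩
      calc k < s.card := hs
        _ = (s : Set ι).ncard := (Set.ncard_coe_finset s).symm
        _ ≤ {i | P i x}.ncard := Set.ncard_le_ncard hsP
  rw [← isOpen_compl_iff, hcompl]
  exact isOpen_iUnion fun s => isOpen_iUnion fun _ => isOpen_biInter_finset fun i _ => hP i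

attribute [local instance] Matrix.frobeniusNormedAddCommGroup Matrix.frobeniusNormedSpace

theorem frob_eq_norm {a b : ℕ} (A : Matrix (Fin a) (Fin b) ℝ) : frob A = ‖A‖ := by
  simp [frob, Matrix.frobenius_norm_def, Real.sqrt_eq_rpow]

theorem isClosed_colSparse (a b k : ℕ) : IsClosed (colSparse a b k) := by
  have : colSparse a b k = ⋂ l, {Θ | {i | Θ i l ≠ 0}.ncard ≤ k} := by
    ext; simp [colSparse]
  rw [this]
  exact isClosed_iInter fun l => isClosed_setOf_ncard_le
    (fun i => isOpen_ne_fun (continuous_id.matrix_elem i l) continuous_const) k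

theorem isClosed_rowSparse (a b p : ℕ) : IsClosed (rowSparse a b p) :=
  isClosed_setOf_ncard_le (fun i => by
    rw [Set.ofPred_exists]
    exact isOpen_iUnion fun l => isOpen_ne_fun (continuous_id.matrix_elem i l) continuous_const) p

theorem smul_mem_colSparse {a b k : ℕ} (c : ℝ) {Θ : Matrix (Fin a) (Fin b) ℝ}
    (hΘ : Θ ∈ colSparse a b k) : c • Θ ∈ colSparse a b k := fun l =>
  (Set.ncard_le_ncard fun i (hi : c * Θ i l ≠ 0) => right_ne_zero_of_mul hi).trans (hΘ l)

theorem smul_mem_rowSparse {a b p : ℕ} (c : ℝ) {Θ : Matrix (Fin a) (Fin b) ℝ}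
    (hΘ : Θ ∈ rowSparse a b p) : c • Θ ∈ rowSparse a b p :=
  (Set.ncard_le_ncard fun i (hi : ∃ l, c * Θ i l ≠ 0) =>
    hi.imp fun _ => right_ne_zero_of_mul).trans hΘ

theorem stmt_3_general (m n L k p : ℕ)
    (Φ : Matrix (Fin m) (Fin n) ℝ) (Y : Matrix (Fin m) (Fin L) ℝ)
    (hnull : {Θ : Matrix (Fin n) (Fin L) ℝ | Φ * Θ = 0} ∩ colSparse n L k ∩ rowSparse n L p
      = {0}) :
    ∃ C : ℝ, 0 < C ∧
      ∀ Θ ∈ colSparse n L k ∩ rowSparse n L p,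
        frob (Y - Φ * Θ) ≤ frob Y → frob Θ ≤ C := by
  obtain ⟨c, hc, hcΘ⟩ := exists_pos_mul_norm_le_norm_of_isClosed_cone
    (mulLeftLinearMap (Fin L) ℝ Φ) ((isClosed_colSparse n L k).inter (isClosed_rowSparse n L p))
    (fun a _ Θ hΘ => ⟨smul_mem_colSparse a hΘ.1, smul_mem_rowSparse a hΘ.2⟩)
    (fun Θ hΘ hΦΘ => hnull.subset ⟨⟨hΦΘ, hΘ.1⟩, hΘ.2⟩)
  simp only [frob_eq_norm]
  refine ⟨2 * ‖Y‖ / c + 1, by positivity, fun Θ hΘ hres => ?_⟩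
  have hΦΘ : ‖Φ * Θ‖ ≤ 2 * ‖Y‖ :=
    calc ‖Φ * Θ‖ = ‖Y - (Y - Φ * Θ)‖ := by rw [sub_sub_cancel]
      _ ≤ ‖Y‖ + ‖Y - Φ * Θ‖ := norm_sub_le _ _
      _ ≤ 2 * ‖Y‖ := by linarith
  calc ‖Θ‖ ≤ 2 * ‖Y‖ / c := by
        rw [le_div_iff₀ hc, mul_comm]
        exact (hcΘ Θ hΘ).trans hΦΘ
    _ ≤ 2 * ‖Y‖ / c + 1 := le_add_of_nonneg_right zero_le_one

theorem stmt_3 (m n L k p : ℕ) (hm : 0 < m) (hn : 0 < n) (hL : 0 < L)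
    (hk : 0 < k) (hp : 0 < p)
    (Φ : Matrix (Fin m) (Fin n) ℝ) (Y : Matrix (Fin m) (Fin L) ℝ)
    (hnull : {Θ : Matrix (Fin n) (Fin L) ℝ | Φ * Θ = 0} ∩ colSparse n L k ∩ rowSparse n L p
      = {0}) :
    ∃ C : ℝ, 0 < C ∧
      ∀ Θ ∈ colSparse n L k ∩ rowSparse n L p,
        frob (Y - Φ * Θ) ≤ frob Y → frob Θ ≤ C :=
  stmt_3_general m n L k p Φ Y hnull
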